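/- Let Ψ₁(z) = ((a₁z² − 25c₃²/(96a₁))z⁴, −i(a₁z² + 25c₃²/(96a₁))z⁴, c₃z⁵), z = u+iv. Then Im Ψ₁(u+iv) = s[0,−a₁,0,c₃](u,v) for all (u,v) ∈ ℝ², i.e., Im Ψ₁ equals the chart s₂[−a₁, c₃]. -/
import Mathlib


open Complex

/-- The family of degree-6 polynomial minimal charts `s[a₁,a₂,c₃,d₃]` from
Section 5 of the paper. -/
noncomputable def sChart (a₁ a₂ c₃ d₃ : ℝ) (u v : ℝ) : ℝ × ℝ × ℝ :=
  (a₁ * (u ^ 6 - 15 * u ^ 4 * v ^ 2 + 15 * u ^ 2 * v ^ 4 - v ^ 6) -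
      2 * a₂ * u * v * (3 * u ^ 4 - 10 * u ^ 2 * v ^ 2 + 3 * v ^ 4) -
      (25 * (a₁ * c₃ ^ 2 - 2 * a₂ * c₃ * d₃ - a₁ * d₃ ^ 2) /
          (96 * (a₁ ^ 2 + a₂ ^ 2))) * (u ^ 4 - 6 * u ^ 2 * v ^ 2 + v ^ 4) -
      (25 * (a₂ * c₃ ^ 2 + 2 * a₁ * c₃ * d₃ - a₂ * d₃ ^ 2) /
          (24 * (a₁ ^ 2 + a₂ ^ 2))) * u * v * (u ^ 2 - v ^ 2),
    2 * a₁ * u * v * (3 * u ^ 4 - 10 * u ^ 2 * v ^ 2 + 3 * v ^ 4) +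
      a₂ * (u ^ 6 - 15 * u ^ 4 * v ^ 2 + 15 * u ^ 2 * v ^ 4 - v ^ 6) +
      (25 * (a₁ * c₃ ^ 2 - 2 * a₂ * c₃ * d₃ - a₁ * d₃ ^ 2) /
          (24 * (a₁ ^ 2 + a₂ ^ 2))) * u * v * (u ^ 2 - v ^ 2) -
      (25 * (a₂ * c₃ ^ 2 + 2 * a₁ * c₃ * d₃ - a₂ * d₃ ^ 2) /
          (96 * (a₁ ^ 2 + a₂ ^ 2))) * (u ^ 4 - 6 * u ^ 2 * v ^ 2 + v ^ 4),
    c₃ * u * (u ^ 4 - 10 * u ^ 2 * v ^ 2 + 5 * v ^ 4) +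
      d₃ * v * (5 * u ^ 4 - 10 * u ^ 2 * v ^ 2 + v ^ 4))

/-- the imaginary part of the Weierstrass minimal curve
`Ψ₁(z) = ((a₁z² − 25c₃²/(96a₁))z⁴, −i(a₁z² + 25c₃²/(96a₁))z⁴, c₃z⁵)` is the
chart `s[0,−a₁,0,c₃]` (i.e. `s₂[−a₁,c₃]`). -/
theorem im_psi1_eq_s2 (a₁ c₃ : ℝ) (ha₁ : a₁ ≠ 0) :
    let Ψ₁ : ℂ → ℂ × ℂ × ℂ := fun z =>
      (((a₁ : ℂ) * z ^ 2 - 25 * c₃ ^ 2 / (96 * a₁)) * z ^ 4,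
        -Complex.I * ((a₁ : ℂ) * z ^ 2 + 25 * c₃ ^ 2 / (96 * a₁)) * z ^ 4,
        (c₃ : ℂ) * z ^ 5)
    ∀ u v : ℝ,
      ((Ψ₁ (u + v * Complex.I)).1.im, (Ψ₁ (u + v * Complex.I)).2.1.im,
        (Ψ₁ (u + v * Complex.I)).2.2.im) = sChart 0 (-a₁) 0 c₃ u v := by
  intro Ψ₁ u v
  simp only [Ψ₁, sChart, Prod.mk.injEq]
  have hc : (25 * (c₃ : ℂ) ^ 2 / (96 * (a₁ : ℂ))) = ((25 * c₃ ^ 2 / (96 * a₁) : ℝ) : ℂ) := by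
    push_cast; ring
  rw [hc]
  set r : ℝ := 25 * c₃ ^ 2 / (96 * a₁) with hr
  have hrr : r * (96 * a₁) = 25 * c₃ ^ 2 := by
    try rw [hr]; field_simp
  refine ⟨?_, ?_, ?_⟩ <;>
  · simp only [Complex.add_re, Complex.add_im, Complex.sub_re, Complex.sub_im,
      Complex.mul_re, Complex.mul_im, Complex.neg_re, Complex.neg_im,
      Complex.I_re, Complex.I_im, Complex.ofReal_re, Complex.ofReal_im,
      pow_succ, pow_zero, one_mul, Complex.one_re, Complex.one_im]
    try rw [hr]
    field_simp
    ring
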